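/- arXiv:2001.06685 — 2 statements merged into one kernel-verified Lean document; each statement's English description precedes it below -/
import Mathlib

section
/- Let σ₁, σ₂ > 0, ρ² < σ₁²σ₂², s = √(σ₁²σ₂² − ρ²), |α| < π/2, and d = √(σ₂²cos²α − 2ρ sinα cosα + σ₁²sin²α). Let θ₂ = arctan(ρ/s) and let θ₃ ∈ (−π, π) satisfy sin θ₃ = s·sinα/(σ₂d) and cos θ₃ = (σ₂²cosα − ρ sinα)/(σ₂d). Then cos(θ₃ − θ₂) = (s/(σ₁d))·cosα > 0, and hence |θ₃ − θ₂| < π/2. -/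
open Real Set

theorem stmt_6 (σ1 σ2 ρ α : ℝ) (h1 : 0 < σ1) (h2 : 0 < σ2)
    (hρ : ρ ^ 2 < σ1 ^ 2 * σ2 ^ 2) (hα : |α| < π / 2)
    (s : ℝ) (hs : s = Real.sqrt (σ1 ^ 2 * σ2 ^ 2 - ρ ^ 2))
    (d : ℝ)
    (hd : d = Real.sqrt (σ2 ^ 2 * Real.cos α ^ 2 - 2 * ρ * Real.sin α * Real.cos α
        + σ1 ^ 2 * Real.sin α ^ 2))
    (θ₂ : ℝ) (hθ₂ : θ₂ = Real.arctan (ρ / s))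
    (θ₃ : ℝ) (hθ₃mem : θ₃ ∈ Set.Ioo (-π) π)
    (hsin3 : Real.sin θ₃ = s * Real.sin α / (σ2 * d))
    (hcos3 : Real.cos θ₃ = (σ2 ^ 2 * Real.cos α - ρ * Real.sin α) / (σ2 * d)) :
    Real.cos (θ₃ - θ₂) = (s / (σ1 * d)) * Real.cos α ∧
      0 < (s / (σ1 * d)) * Real.cos α ∧ |θ₃ - θ₂| < π / 2 := by
  have hcosα : 0 < Real.cos α := by
    apply Real.cos_pos_of_mem_Ioo
    constructor <;> [linarith [abs_lt.mp hα |>.1]; exact (abs_lt.mp hα).2]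
  have hpyth := Real.sin_sq_add_cos_sq α
  have hs0 : 0 < s := by
    rw [hs]; exact Real.sqrt_pos.mpr (by linarith)
  have hs2 : s ^ 2 = σ1 ^ 2 * σ2 ^ 2 - ρ ^ 2 := by
    rw [hs, Real.sq_sqrt (by linarith)]
  have hdsq : 0 < σ2 ^ 2 * Real.cos α ^ 2 - 2 * ρ * Real.sin α * Real.cos α
        + σ1 ^ 2 * Real.sin α ^ 2 := by
    rcases eq_or_ne (Real.sin α) 0 with h | h
    · rw [h]; nlinarith [mul_pos (mul_pos h2 h2) (mul_pos hcosα hcosα)]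
    · have hY : 0 < Real.sin α ^ 2 := by positivity
      nlinarith [sq_nonneg (σ1 * σ2 * σ2 * Real.cos α - ρ * σ1 * Real.sin α),
        mul_pos (mul_pos (mul_pos h1 h1) (sub_pos.mpr hρ)) hY]
  have hd0 : 0 < d := by rw [hd]; exact Real.sqrt_pos.mpr hdsq
  have hd2 : d ^ 2 = σ2 ^ 2 * Real.cos α ^ 2 - 2 * ρ * Real.sin α * Real.cos α
        + σ1 ^ 2 * Real.sin α ^ 2 := by
    rw [hd, Real.sq_sqrt hdsq.le]
  -- cos and sin of θ₂
  have hroot : Real.sqrt (1 + (ρ / s) ^ 2) = σ1 * σ2 / s := by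
    rw [show 1 + (ρ / s) ^ 2 = (σ1 * σ2 / s) ^ 2 by
      field_simp; nlinarith [hs2]]
    exact Real.sqrt_sq (by positivity)
  have hcos2 : Real.cos θ₂ = s / (σ1 * σ2) := by
    rw [hθ₂, Real.cos_arctan, hroot]
    field_simp
  have hsin2 : Real.sin θ₂ = ρ / (σ1 * σ2) := by
    rw [hθ₂, Real.sin_arctan, hroot]
    field_simp
  have hmain : Real.cos (θ₃ - θ₂) = (s / (σ1 * d)) * Real.cos α := by
    rw [Real.cos_sub, hcos2, hsin2, hsin3, hcos3]
    field_simp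
    ring
  have hpos : 0 < (s / (σ1 * d)) * Real.cos α := by positivity
  refine ⟨hmain, hpos, ?_⟩
  -- θ₂ ∈ (-π/2, π/2)
  have hθ₂lt : θ₂ < π / 2 := hθ₂ ▸ Real.arctan_lt_pi_div_two _
  have hθ₂gt : -(π / 2) < θ₂ := hθ₂ ▸ Real.neg_pi_div_two_lt_arctan _
  obtain ⟨h3l, h3r⟩ := hθ₃mem
  by_contra hcon
  push_neg at hcon
  have hb : |θ₃ - θ₂| ≤ π + π / 2 := by
    rw [abs_le]; constructor <;> linarith
  have : Real.cos |θ₃ - θ₂| ≤ 0 :=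
    Real.cos_nonpos_of_pi_div_two_le_of_le hcon hb
  rw [Real.cos_abs, hmain] at this
  linarith
end

section
/- Let (X_n) be a stochastic process on ℝ^d adapted to a filtration (F_n), and let f : ℝ^d → [0,∞) be bounded with f(x) → 0 as ‖x‖ → ∞ and inf_{‖x‖≤r} f(x) > 0 for every r. Suppose there exists r₀ such that E[f(X_{n+1}) − f(X_n) | F_n] ≤ 0 on {‖X_n‖ ≥ r₀} for all n. If almost surely limsup_n ‖X_n‖ = ∞, then almost surely lim_n ‖X_n‖ = ∞. -/
/-!
Fix a radius `R ≥ r₀` and let `ε > 0` be a lower bound of `f` on the ball of radius `R`.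
Started at time `j`, the process `f ∘ X` stopped at the first return to that ball is a
nonnegative supermartingale, and it is `≥ ε` at the return time; optional stopping bounds the
probability of a return by `f (X j) / ε`. Taking for `j` the first time `‖X‖` exceeds a radius
`R₁` beyond which `f ≤ ε δ`, the probability of exceeding `R₁` and then returning to the ball
is at most `δ`. As `limsup ‖X n‖ = ∞` almost surely, every radius is exceeded, so almost surely
every ball is visited only finitely often.
-/

open MeasureTheory Filter
open scoped NNReal

section StoppedDrift

variable {Ω : Type*} {m0 : MeasurableSpace Ω} {μ : Measure Ω} {ℱ : Filtration ℕ m0}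
  {g : ℕ → Ω → ℝ} {τ : Ω → WithTop ℕ}

lemma stoppedProcess_succ_sub (n : ℕ) (ω : Ω) :
    stoppedProcess g τ (n + 1) ω - stoppedProcess g τ n ω =
      {ω | (n : WithTop ℕ) < τ ω}.indicator (fun ω => g (n + 1) ω - g n ω) ω := by
  -- `(n : WithTop ℕ)` is `Nat.cast`, while the stopping-time API states its lemmas with
  -- `WithTop.some`; the two agree only up to unfolding, hence the `by exact` below.
  by_cases h : (n : WithTop ℕ) < τ ω
  · have h' : ((n + 1 : ℕ) : WithTop ℕ) ≤ τ ω := by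
      cases hτω : τ ω with
      | top => exact le_top
      | coe t => rw [hτω] at h; exact WithTop.coe_le_coe.2 (WithTop.coe_lt_coe.1 h)
    rw [Set.indicator_of_mem (show ω ∈ {ω | (n : WithTop ℕ) < τ ω} from h),
      stoppedProcess_eq_of_le (i := n) (by exact h.le),
      stoppedProcess_eq_of_le (i := n + 1) (by exact h')]
  · rw [not_lt] at h
    have h' : τ ω ≤ ((n + 1 : ℕ) : WithTop ℕ) := h.trans (by exact_mod_cast n.le_succ)
    rw [Set.indicator_of_notMem (show ω ∉ {ω | (n : WithTop ℕ) < τ ω} from not_lt.2 h),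
      stoppedProcess_eq_of_ge (i := n) (by exact h),
      stoppedProcess_eq_of_ge (i := n + 1) (by exact h'), sub_self]

variable [IsFiniteMeasure μ]

lemma setIntegral_stoppedProcess_succ_le (hτ : IsStoppingTime ℱ τ)
    (hg : ∀ n, Integrable (g n) μ) {n : ℕ} {A : Set Ω} (hA : MeasurableSet[ℱ n] A)
    (hdrift : ∀ᵐ ω ∂μ, (n : WithTop ℕ) < τ ω →
      μ[fun ω => g (n + 1) ω - g n ω | ℱ n] ω ≤ 0) :
    ∫ ω in A, stoppedProcess g τ (n + 1) ω ∂μ ≤ ∫ ω in A, stoppedProcess g τ n ω ∂μ := by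
  have hS : MeasurableSet[ℱ n] (A ∩ {ω | (n : WithTop ℕ) < τ ω}) :=
    hA.inter (hτ.measurableSet_gt n)
  have hincrement : ∫ ω in A, stoppedProcess g τ (n + 1) ω - stoppedProcess g τ n ω ∂μ =
      ∫ ω in A ∩ {ω | (n : WithTop ℕ) < τ ω}, g (n + 1) ω - g n ω ∂μ := by
    simp_rw [stoppedProcess_succ_sub]
    rw [setIntegral_indicator]
    exact ℱ.le n _ (hτ.measurableSet_gt n)
  have hdecrease : ∫ ω in A ∩ {ω | (n : WithTop ℕ) < τ ω}, g (n + 1) ω - g n ω ∂μ ≤ 0 := by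
    rw [← setIntegral_condExp (ℱ.le n) (f := fun ω => g (n + 1) ω - g n ω)
      ((hg _).sub (hg n)) hS]
    exact setIntegral_nonpos_ae (ℱ.le n _ hS)
      (by filter_upwards [hdrift] with ω h hω using h hω.2)
  have hY := integrable_stoppedProcess hτ hg
  rw [integral_sub (hY _).integrableOn (hY _).integrableOn] at hincrement
  linarith

lemma setIntegral_stoppedProcess_le (hτ : IsStoppingTime ℱ τ)
    (hg : ∀ n, Integrable (g n) μ) {j n : ℕ} (hjn : j ≤ n) {A : Set Ω} (hA : MeasurableSet[ℱ j] A)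
    (hdrift : ∀ k, j ≤ k → ∀ᵐ ω ∂μ, (k : WithTop ℕ) < τ ω →
      μ[fun ω => g (k + 1) ω - g k ω | ℱ k] ω ≤ 0) :
    ∫ ω in A, stoppedProcess g τ n ω ∂μ ≤ ∫ ω in A, stoppedProcess g τ j ω ∂μ := by
  induction n, hjn using Nat.le_induction with
  | base => exact le_rfl
  | succ k hjk ih =>
    exact (setIntegral_stoppedProcess_succ_le hτ hg (ℱ.mono hjk _ hA) (hdrift k hjk)).trans ih

lemma measureReal_inter_le_le (hτ : IsStoppingTime ℱ τ) (hg : ∀ n, Integrable (g n) μ)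
    (hg0 : ∀ n ω, 0 ≤ g n ω) {j : ℕ} (hjτ : ∀ ω, (j : WithTop ℕ) ≤ τ ω)
    (hdrift : ∀ k, j ≤ k → ∀ᵐ ω ∂μ, (k : WithTop ℕ) < τ ω →
      μ[fun ω => g (k + 1) ω - g k ω | ℱ k] ω ≤ 0)
    {ε : ℝ} (hε : 0 < ε) (hgτ : ∀ ω, τ ω ≠ ⊤ → ε ≤ stoppedValue g τ ω)
    {c : ℝ≥0} {A : Set Ω} (hA : MeasurableSet[ℱ j] A) (hAg : ∀ ω ∈ A, g j ω ≤ ε * c) (n : ℕ) :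
    μ.real (A ∩ {ω | τ ω ≤ (j + n : ℕ)}) ≤ c * μ.real A := by
  have hA0 : MeasurableSet A := ℱ.le j _ hA
  have hY := integrable_stoppedProcess hτ hg
  have hS : MeasurableSet (A ∩ {ω | τ ω ≤ (j + n : ℕ)}) :=
    hA0.inter (ℱ.le _ _ (hτ.measurableSet_le (j + n)))
  refine le_of_mul_le_mul_left ?_ hε
  calc ε * μ.real (A ∩ {ω | τ ω ≤ (j + n : ℕ)})
      = ∫ _ in A ∩ {ω | τ ω ≤ (j + n : ℕ)}, ε ∂μ := by
        rw [setIntegral_const, smul_eq_mul, mul_comm]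
    _ ≤ ∫ ω in A ∩ {ω | τ ω ≤ (j + n : ℕ)}, stoppedProcess g τ (j + n) ω ∂μ := by
        refine setIntegral_mono_on (integrable_const _).integrableOn (hY _).integrableOn hS
          fun ω hω => ?_
        rw [stoppedProcess_eq_of_ge (by exact hω.2)]
        exact hgτ ω (ne_top_of_le_ne_top WithTop.coe_ne_top hω.2)
    _ ≤ ∫ ω in A, stoppedProcess g τ (j + n) ω ∂μ :=
        setIntegral_mono_set (hY _).integrableOn (ae_of_all _ fun ω => hg0 _ _)
          Set.inter_subset_left.eventuallyLE
    _ ≤ ∫ ω in A, stoppedProcess g τ j ω ∂μ :=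
        setIntegral_stoppedProcess_le hτ hg (Nat.le_add_right j n) hA hdrift
    _ = ∫ ω in A, g j ω ∂μ :=
        setIntegral_congr_fun hA0 fun ω _ => stoppedProcess_eq_of_le (by exact hjτ ω)
    _ ≤ ∫ _ in A, ε * c ∂μ :=
        setIntegral_mono_on (hg j).integrableOn (integrable_const _).integrableOn hA0 hAg
    _ = ε * (c * μ.real A) := by
        rw [setIntegral_const, smul_eq_mul]; ring

lemma measure_inter_ne_top_le (hτ : IsStoppingTime ℱ τ) (hg : ∀ n, Integrable (g n) μ)
    (hg0 : ∀ n ω, 0 ≤ g n ω) {j : ℕ} (hjτ : ∀ ω, (j : WithTop ℕ) ≤ τ ω)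
    (hdrift : ∀ k, j ≤ k → ∀ᵐ ω ∂μ, (k : WithTop ℕ) < τ ω →
      μ[fun ω => g (k + 1) ω - g k ω | ℱ k] ω ≤ 0)
    {ε : ℝ} (hε : 0 < ε) (hgτ : ∀ ω, τ ω ≠ ⊤ → ε ≤ stoppedValue g τ ω)
    {c : ℝ≥0} {A : Set Ω} (hA : MeasurableSet[ℱ j] A) (hAg : ∀ ω ∈ A, g j ω ≤ ε * c) :
    μ (A ∩ {ω | τ ω ≠ ⊤}) ≤ c * μ A := by
  have hunion : A ∩ {ω | τ ω ≠ ⊤} = ⋃ n, A ∩ {ω | τ ω ≤ (j + n : ℕ)} := by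
    ext ω
    simp only [Set.mem_inter_iff, Set.mem_iUnion, Set.mem_ofPred_eq]
    refine ⟨fun ⟨hω, hτω⟩ => ?_,
      fun ⟨n, hω, hτω⟩ => ⟨hω, ne_top_of_le_ne_top WithTop.coe_ne_top hτω⟩⟩
    lift τ ω to ℕ using hτω with t
    exact ⟨t, hω, WithTop.coe_le_coe.2 (t.le_add_left j)⟩
  have hmono : Monotone fun n => A ∩ {ω | τ ω ≤ (j + n : ℕ)} := fun m n hmn =>
    Set.inter_subset_inter_right _ fun _ hω =>
      le_trans (α := WithTop ℕ) hω (WithTop.coe_le_coe.2 (Nat.add_le_add_left hmn j))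
  rw [hunion, hmono.measure_iUnion]
  refine iSup_le fun n => ?_
  rw [← ENNReal.toReal_le_toReal (measure_ne_top _ _) (by finiteness)]
  simpa [ENNReal.toReal_mul, measureReal_def] using
    measureReal_inter_le_le hτ hg hg0 hjτ hdrift hε hgτ hA hAg n

end StoppedDrift

section Transience

variable {Ω E : Type*} {m0 : MeasurableSpace Ω} {μ : Measure Ω}
  {ℱ : Filtration ℕ m0} [NormedAddCommGroup E] [MeasurableSpace E] [OpensMeasurableSpace E]
  {X : ℕ → Ω → E} {f : E → ℝ} {r₀ : ℝ}

lemma measure_inter_exists_norm_le_le [IsFiniteMeasure μ] (hX : Adapted ℱ X) (hf0 : ∀ x, 0 ≤ f x)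
    (hfmeas : Measurable f) {K : ℝ} (hfK : ∀ x, f x ≤ K)
    (hdrift : ∀ n, ∀ᵐ ω ∂μ, r₀ ≤ ‖X n ω‖ →
      μ[fun ω' => f (X (n + 1) ω') - f (X n ω') | ℱ n] ω ≤ 0)
    {R ε : ℝ} (hR : r₀ ≤ R) (hε : 0 < ε) (hεf : ∀ x, ‖x‖ ≤ R → ε ≤ f x)
    {j : ℕ} {c : ℝ≥0} {A : Set Ω} (hA : MeasurableSet[ℱ j] A)
    (hAf : ∀ ω ∈ A, f (X j ω) ≤ ε * c) :
    μ (A ∩ {ω | ∃ n, j ≤ n ∧ ‖X n ω‖ ≤ R}) ≤ c * μ A := by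
  set τ := hittingAfter X (Metric.closedBall 0 R) j
  have hτ : IsStoppingTime ℱ τ :=
    hX.isStoppingTime_hittingAfter Metric.isClosed_closedBall.measurableSet
  have hint : ∀ n, Integrable (fun ω => f (X n ω)) μ := fun n =>
    .of_bound (hfmeas.comp ((hX n).mono (ℱ.le n) le_rfl)).aestronglyMeasurable K
      (ae_of_all _ fun ω => by rw [Real.norm_of_nonneg (hf0 _)]; exact hfK _)
  have hreturn : {ω | ∃ n, j ≤ n ∧ ‖X n ω‖ ≤ R} = {ω | τ ω ≠ ⊤} := by
    ext ω; simp [τ, hittingAfter_eq_top_iff]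
  rw [hreturn]
  refine measure_inter_ne_top_le (g := fun n ω => f (X n ω)) hτ hint (fun _ _ => hf0 _)
    (fun ω => le_hittingAfter ω) (fun k hjk => ?_) hε
    (fun ω hω => hεf _ (mem_closedBall_zero_iff.1 (hittingAfter_mem_set_of_ne_top hω))) hA hAf
  filter_upwards [hdrift k] with ω hω hkτ
  have hk : X k ω ∉ Metric.closedBall 0 R := notMem_of_lt_hittingAfter hkτ hjk
  exact hω (hR.trans (not_le.1 (mt mem_closedBall_zero_iff.2 hk)).le)

lemma measure_exists_norm_ge_and_return_le [IsProbabilityMeasure μ] (hX : Adapted ℱ X)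
    (hf0 : ∀ x, 0 ≤ f x) (hfmeas : Measurable f) {K : ℝ} (hfK : ∀ x, f x ≤ K)
    (hdrift : ∀ n, ∀ᵐ ω ∂μ, r₀ ≤ ‖X n ω‖ →
      μ[fun ω' => f (X (n + 1) ω') - f (X n ω') | ℱ n] ω ≤ 0)
    {R ε : ℝ} (hR : r₀ ≤ R) (hε : 0 < ε) (hεf : ∀ x, ‖x‖ ≤ R → ε ≤ f x)
    {R₁ : ℝ} {δ : ℝ≥0} (hR₁ : ∀ x, R₁ ≤ ‖x‖ → f x ≤ ε * δ) :
    μ {ω | ∃ j, R₁ ≤ ‖X j ω‖ ∧ ∃ n, j ≤ n ∧ ‖X n ω‖ ≤ R} ≤ δ := by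
  set σ := hittingAfter X {x | R₁ ≤ ‖x‖} 0
  have hσ : IsStoppingTime ℱ σ :=
    hX.isStoppingTime_hittingAfter (isClosed_le continuous_const continuous_norm).measurableSet
  have hexit : ∀ (j : ℕ) ω, σ ω = j → R₁ ≤ ‖X j ω‖ := by
    intro j ω hσω
    have h : R₁ ≤ ‖X (σ ω).untopA ω‖ :=
      hittingAfter_mem_set_of_ne_top (hσω ▸ WithTop.coe_ne_top : σ ω ≠ ⊤)
    rw [hσω] at h
    exact h
  have hsub : {ω | ∃ j, R₁ ≤ ‖X j ω‖ ∧ ∃ n, j ≤ n ∧ ‖X n ω‖ ≤ R} ⊆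
      ⋃ j : ℕ, {ω | σ ω = j} ∩ {ω | ∃ n, j ≤ n ∧ ‖X n ω‖ ≤ R} := by
    rintro ω ⟨i, hi, n, hin, hn⟩
    have hσi : σ ω ≤ i := hittingAfter_le_of_mem (Nat.zero_le i) hi
    lift σ ω to ℕ using ne_top_of_le_ne_top WithTop.coe_ne_top hσi with t ht
    exact Set.mem_iUnion.2 ⟨t, ht.symm, n, (WithTop.coe_le_coe.1 hσi).trans hin, hn⟩
  have hdisj : Pairwise fun i j : ℕ => Disjoint {ω | σ ω = i} {ω | σ ω = j} := fun i j hij =>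
    Set.disjoint_left.2 fun ω hi hj => hij (WithTop.coe_injective (hi.symm.trans hj))
  calc μ {ω | ∃ j, R₁ ≤ ‖X j ω‖ ∧ ∃ n, j ≤ n ∧ ‖X n ω‖ ≤ R}
      ≤ ∑' j : ℕ, μ ({ω | σ ω = j} ∩ {ω | ∃ n, j ≤ n ∧ ‖X n ω‖ ≤ R}) :=
        (measure_mono hsub).trans (measure_iUnion_le _)
    _ ≤ ∑' j : ℕ, δ * μ {ω | σ ω = j} := ENNReal.tsum_le_tsum fun j =>
        measure_inter_exists_norm_le_le hX hf0 hfmeas hfK hdrift hR hε hεf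
          (hσ.measurableSet_eq j) fun ω hω => hR₁ _ (hexit j ω hω)
    _ = δ * μ (⋃ j : ℕ, {ω | σ ω = j}) := by
        rw [ENNReal.tsum_mul_left, measure_iUnion hdisj fun j => ℱ.le j _ (hσ.measurableSet_eq j)]
    _ ≤ δ := mul_le_of_le_one_right' prob_le_one

lemma measure_limsup_eq_top_and_frequently_norm_le_eq_zero [IsProbabilityMeasure μ]
    (hX : Adapted ℱ X) (hf0 : ∀ x, 0 ≤ f x) (hfmeas : Measurable f) {K : ℝ} (hfK : ∀ x, f x ≤ K)
    (hftend : Tendsto f (Bornology.cobounded E) (nhds 0))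
    (hfpos : ∀ r : ℝ, ∃ ε > 0, ∀ x, ‖x‖ ≤ r → ε ≤ f x)
    (hdrift : ∀ n, ∀ᵐ ω ∂μ, r₀ ≤ ‖X n ω‖ →
      μ[fun ω' => f (X (n + 1) ω') - f (X n ω') | ℱ n] ω ≤ 0) (R : ℝ) :
    μ {ω | limsup (fun n => (‖X n ω‖ : EReal)) atTop = ⊤ ∧ ∃ᶠ n in atTop, ‖X n ω‖ ≤ R} = 0 := by
  obtain ⟨ε, hε, hεf⟩ := hfpos (max r₀ R)
  refine le_antisymm (ENNReal.le_of_forall_pos_le_add fun δ hδ _ => ?_) bot_le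
  obtain ⟨R₁, hR₁⟩ : ∃ R₁, ∀ x, R₁ ≤ ‖x‖ → f x ≤ ε * δ := by
    have h := hftend.eventually (ge_mem_nhds (by positivity : (0 : ℝ) < ε * δ))
    rw [← comap_norm_atTop, eventually_comap, eventually_atTop] at h
    obtain ⟨R₁, hR₁⟩ := h
    exact ⟨R₁, fun x hx => hR₁ _ hx x rfl⟩
  rw [zero_add]
  refine (measure_mono ?_).trans (measure_exists_norm_ge_and_return_le hX hf0 hfmeas hfK hdrift
    (le_max_left r₀ R) hε hεf hR₁)
  rintro ω ⟨htop, hfreq⟩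
  obtain ⟨j, hj⟩ := (frequently_lt_of_lt_limsup (by isBoundedDefault)
    (htop ▸ EReal.coe_lt_top R₁)).exists
  obtain ⟨n, hn, hjn⟩ := (hfreq.and_eventually (eventually_ge_atTop j)).exists
  exact ⟨j, (EReal.coe_lt_coe_iff.1 hj).le, n, hjn, hn.trans (le_max_right _ _)⟩

end Transience

theorem stmt_14 {Ω : Type*} {m0 : MeasurableSpace Ω} {μ : Measure Ω} [IsProbabilityMeasure μ]
    {d : ℕ} (X : ℕ → Ω → EuclideanSpace ℝ (Fin d)) (ℱ : Filtration ℕ m0)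
    (hadapted : Adapted ℱ X)
    (f : EuclideanSpace ℝ (Fin d) → ℝ) (hf0 : ∀ x, 0 ≤ f x) (hfmeas : Measurable f)
    (hfbdd : ∃ K : ℝ, ∀ x, f x ≤ K)
    (hftend : Tendsto f (Bornology.cobounded (EuclideanSpace ℝ (Fin d))) (nhds 0))
    (hfpos : ∀ r : ℝ, ∃ ε > 0, ∀ x, ‖x‖ ≤ r → ε ≤ f x)
    (r₀ : ℝ)
    (hdrift : ∀ n, ∀ᵐ ω ∂μ,
        r₀ ≤ ‖X n ω‖ →
          (μ[fun ω' => f (X (n + 1) ω') - f (X n ω') | ℱ n]) ω ≤ 0)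
    (hlimsup : ∀ᵐ ω ∂μ, Filter.limsup (fun n => (‖X n ω‖ : EReal)) atTop = ⊤) :
    ∀ᵐ ω ∂μ, Tendsto (fun n => ‖X n ω‖) atTop atTop := by
  obtain ⟨K, hK⟩ := hfbdd
  have hreturns : ∀ᵐ ω ∂μ, ∀ k : ℕ, ω ∉ {ω | limsup (fun n => (‖X n ω‖ : EReal)) atTop = ⊤ ∧
      ∃ᶠ n in atTop, ‖X n ω‖ ≤ k} := ae_all_iff.2 fun k => measure_eq_zero_iff_ae_notMem.1 <|
    measure_limsup_eq_top_and_frequently_norm_le_eq_zero hadapted hf0 hfmeas hK hftend hfpos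
      hdrift k
  filter_upwards [hlimsup, hreturns] with ω htop hω
  refine tendsto_atTop.2 fun b => ?_
  obtain ⟨k, hbk⟩ := exists_nat_ge b
  have hfar : ∀ᶠ n in atTop, ¬‖X n ω‖ ≤ k := not_frequently.1 fun h => hω k ⟨htop, h⟩
  exact hfar.mono fun n hn => hbk.trans (not_le.1 hn).le
end
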